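/- Let ε₁, ε₂, ε₃, ε₄, a, b be complex numbers with ε₁+ε₂+ε₃+ε₄ = 0, generic so that all sh-factors below are nonzero, where sh(t) = e^{t/2} − e^{−t/2}. Define P = sh(−ε₁−ε₄)·sh(−ε₂−ε₄)·sh(−ε₃−ε₄) / (sh(−ε₁)·sh(−ε₂)·sh(−ε₃)·sh(−ε₄)) and G(φ) = [sh(b−φ) / sh(a−φ)] · [sh(φ−a+ε₁)·sh(φ−a+ε₂)·sh(φ−a+ε₃)·sh(φ−a+ε₄)] / [sh(φ−a−ε₁−ε₃)·sh(φ−a−ε₂−ε₃)·sh(φ−a−ε₁−ε₄)·sh(φ−a−ε₂−ε₄)]. Then −P · lim_{φ→a} (φ − a) · G(φ) = sh(b−a)·sh(ε₁+ε₂) / (sh(ε₁+ε₃)·sh(ε₂+ε₃)). -/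

import Mathlib

open Filter Topology

/-- `sh x = 2 sinh(x/2) = e^{x/2} - e^{-x/2}`. -/
noncomputable def sh (x : ℂ) : ℂ := Complex.exp (x / 2) - Complex.exp (-x / 2)

/-- The standard one-instanton prefactor. -/
noncomputable def pref (ε₁ ε₂ ε₃ ε₄ : ℂ) : ℂ :=
  sh (-ε₁ - ε₄) * sh (-ε₂ - ε₄) * sh (-ε₃ - ε₄) /
    (sh (-ε₁) * sh (-ε₂) * sh (-ε₃) * sh (-ε₄))

lemma sh_neg (x : ℂ) : sh (-x) = -sh x := by
  simp only [sh, neg_div, neg_neg]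
  ring

lemma sh_zero : sh 0 = 0 := by simp [sh]

lemma sh_continuous : Continuous sh := by
  unfold sh; fun_prop

lemma sh_hasDerivAt : HasDerivAt sh 1 0 := by
  have h1 : HasDerivAt (fun x : ℂ => Complex.exp (x / 2))
      (Complex.exp ((0 : ℂ) / 2) * (1 / 2)) 0 :=
    (((hasDerivAt_id (0 : ℂ)).div_const 2)).cexp
  have h2 : HasDerivAt (fun x : ℂ => Complex.exp (-x / 2))
      (Complex.exp (-(0 : ℂ) / 2) * (-1 / 2)) 0 :=
    ((((hasDerivAt_id (0 : ℂ)).neg).div_const 2)).cexp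
  have := h1.sub h2
  exact this.congr_deriv (by norm_num)

lemma sh_slope : Tendsto (fun t : ℂ => sh t / t) (𝓝[≠] (0 : ℂ)) (𝓝 1) := by
  have h := hasDerivAt_iff_tendsto_slope.mp sh_hasDerivAt
  exact h.congr fun t => by simp [slope_def_field, sh_zero]

lemma sh_inv_slope : Tendsto (fun t : ℂ => t / sh t) (𝓝[≠] (0 : ℂ)) (𝓝 1) := by
  have := sh_slope.inv₀ one_ne_zero
  simpa [inv_div] using this

/-- The JK residue at `φ = a` of the framing node contribution for the two-surface
boundary condition `λ₁₂ = λ₃₄ = 1`, times `-P`, equals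
`sh(b-a) sh(ε₁+ε₂) / (sh(ε₁+ε₃) sh(ε₂+ε₃))`: the level-one PT4 coefficient. -/
theorem PT4_two_surfaces_level_one (ε₁ ε₂ ε₃ ε₄ a b : ℂ)
    (hsum : ε₁ + ε₂ + ε₃ + ε₄ = 0)
    (h1 : sh ε₁ ≠ 0) (h2 : sh ε₂ ≠ 0) (h3 : sh ε₃ ≠ 0) (h4 : sh ε₄ ≠ 0)
    (h13 : sh (ε₁ + ε₃) ≠ 0) (h23 : sh (ε₂ + ε₃) ≠ 0)
    (h14 : sh (ε₁ + ε₄) ≠ 0) (h24 : sh (ε₂ + ε₄) ≠ 0) :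
    Tendsto (fun φ : ℂ =>
        -pref ε₁ ε₂ ε₃ ε₄ *
          ((φ - a) *
            (sh (b - φ) / sh (a - φ) *
              (sh (φ - a + ε₁) * sh (φ - a + ε₂) * sh (φ - a + ε₃) * sh (φ - a + ε₄)) /
              (sh (φ - a - ε₁ - ε₃) * sh (φ - a - ε₂ - ε₃) *
                sh (φ - a - ε₁ - ε₄) * sh (φ - a - ε₂ - ε₄)))))
      (𝓝[≠] a)
      (𝓝 (sh (b - a) * sh (ε₁ + ε₂) / (sh (ε₁ + ε₃) * sh (ε₂ + ε₃)))) := by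
  -- the punctured translation map
  have hmap : Tendsto (fun φ : ℂ => φ - a) (𝓝[≠] a) (𝓝[≠] (0 : ℂ)) := by
    apply tendsto_nhdsWithin_of_tendsto_nhds_of_eventually_within
    · have : Tendsto (fun φ : ℂ => φ - a) (𝓝 a) (𝓝 (a - a)) :=
        (continuous_id.sub continuous_const).tendsto a
      simpa using this.mono_left nhdsWithin_le_nhds
    · filter_upwards [self_mem_nhdsWithin] with φ hφ
      exact sub_ne_zero.mpr hφ
  -- the key limit
  have key : Tendsto (fun φ : ℂ => (φ - a) / sh (a - φ)) (𝓝[≠] a) (𝓝 (-1)) := by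
    have h := (sh_inv_slope.comp hmap).neg
    refine (h.congr fun φ => ?_).mono_right (by norm_num)
    rw [Function.comp_apply, show a - φ = -(φ - a) by ring, sh_neg, div_neg]
  -- continuous pieces
  have t1 : Tendsto (fun φ : ℂ => sh (b - φ)) (𝓝[≠] a) (𝓝 (sh (b - a))) :=
    ((sh_continuous.comp (continuous_const.sub continuous_id)).tendsto a).mono_left
      nhdsWithin_le_nhds
  have tnum : Tendsto (fun φ : ℂ =>
      sh (φ - a + ε₁) * sh (φ - a + ε₂) * sh (φ - a + ε₃) * sh (φ - a + ε₄)) (𝓝[≠] a)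
      (𝓝 (sh ε₁ * sh ε₂ * sh ε₃ * sh ε₄)) := by
    have hc : Continuous fun φ : ℂ =>
        sh (φ - a + ε₁) * sh (φ - a + ε₂) * sh (φ - a + ε₃) * sh (φ - a + ε₄) := by
      have := sh_continuous; fun_prop
    have := (hc.tendsto a).mono_left (nhdsWithin_le_nhds (s := {a}ᶜ))
    simpa using this
  have tden : Tendsto (fun φ : ℂ =>
      sh (φ - a - ε₁ - ε₃) * sh (φ - a - ε₂ - ε₃) * sh (φ - a - ε₁ - ε₄) *
        sh (φ - a - ε₂ - ε₄)) (𝓝[≠] a)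
      (𝓝 (sh (-(ε₁ + ε₃)) * sh (-(ε₂ + ε₃)) * sh (-(ε₁ + ε₄)) * sh (-(ε₂ + ε₄)))) := by
    have hc : Continuous fun φ : ℂ =>
        sh (φ - a - ε₁ - ε₃) * sh (φ - a - ε₂ - ε₃) * sh (φ - a - ε₁ - ε₄) *
          sh (φ - a - ε₂ - ε₄) := by
      have := sh_continuous; fun_prop
    have := (hc.tendsto a).mono_left (nhdsWithin_le_nhds (s := {a}ᶜ))
    have e1 : a - a - ε₁ - ε₃ = -(ε₁ + ε₃) := by ring
    have e2 : a - a - ε₂ - ε₃ = -(ε₂ + ε₃) := by ring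
    have e3 : a - a - ε₁ - ε₄ = -(ε₁ + ε₄) := by ring
    have e4 : a - a - ε₂ - ε₄ = -(ε₂ + ε₄) := by ring
    rwa [e1, e2, e3, e4] at this
  have hDne : sh (-(ε₁ + ε₃)) * sh (-(ε₂ + ε₃)) * sh (-(ε₁ + ε₄)) * sh (-(ε₂ + ε₄)) ≠ 0 := by
    simp only [sh_neg]
    intro h
    rcases mul_eq_zero.mp h with h | h
    · rcases mul_eq_zero.mp h with h | h
      · rcases mul_eq_zero.mp h with h | h
        · exact h13 (neg_eq_zero.mp h)
        · exact h23 (neg_eq_zero.mp h)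
      · exact h14 (neg_eq_zero.mp h)
    · exact h24 (neg_eq_zero.mp h)
  -- assembled limit
  have main : Tendsto (fun φ : ℂ =>
      -pref ε₁ ε₂ ε₃ ε₄ *
        (sh (b - φ) * ((φ - a) / sh (a - φ)) *
          (sh (φ - a + ε₁) * sh (φ - a + ε₂) * sh (φ - a + ε₃) * sh (φ - a + ε₄)) /
          (sh (φ - a - ε₁ - ε₃) * sh (φ - a - ε₂ - ε₃) * sh (φ - a - ε₁ - ε₄) *
            sh (φ - a - ε₂ - ε₄)))) (𝓝[≠] a)
      (𝓝 (-pref ε₁ ε₂ ε₃ ε₄ *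
        (sh (b - a) * (-1) * (sh ε₁ * sh ε₂ * sh ε₃ * sh ε₄) /
          (sh (-(ε₁ + ε₃)) * sh (-(ε₂ + ε₃)) * sh (-(ε₁ + ε₄)) * sh (-(ε₂ + ε₄)))))) :=
    tendsto_const_nhds.mul (((t1.mul key).mul tnum).div tden hDne)
  have hval : -pref ε₁ ε₂ ε₃ ε₄ *
      (sh (b - a) * (-1) * (sh ε₁ * sh ε₂ * sh ε₃ * sh ε₄) /
        (sh (-(ε₁ + ε₃)) * sh (-(ε₂ + ε₃)) * sh (-(ε₁ + ε₄)) * sh (-(ε₂ + ε₄)))) =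
      sh (b - a) * sh (ε₁ + ε₂) / (sh (ε₁ + ε₃) * sh (ε₂ + ε₃)) := by
    unfold pref
    rw [show -ε₁ - ε₄ = -(ε₁ + ε₄) by ring, show -ε₂ - ε₄ = -(ε₂ + ε₄) by ring,
      show -ε₃ - ε₄ = -(ε₃ + ε₄) by ring,
      show ε₃ + ε₄ = -(ε₁ + ε₂) by linear_combination hsum]
    simp only [sh_neg, neg_neg]
    have h42 : sh (ε₄ + ε₂) ≠ 0 := by rwa [add_comm]
    have h41 : sh (ε₄ + ε₁) ≠ 0 := by rwa [add_comm]
    have h31 : sh (ε₃ + ε₁) ≠ 0 := by rwa [add_comm]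
    have h32 : sh (ε₃ + ε₂) ≠ 0 := by rwa [add_comm]
    field_simp
  rw [← hval]
  exact main.congr fun φ => by ring
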